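/- For μ > -1/2, β > -1, γ > -1, α > -1, a nonnegative integer m, and nonnegative integers n ≤ m with n' ≤ m', the polynomials Q^n_{k,m}(t,x) = P_{m-n}^{(n+β+μ+(d-1)/2, γ)}(1-2t) t^{n/2} P_k^n(x/√t) on the paraboloid U^{d+1} = {(t,x) : ‖x‖² ≤ t, 0 ≤ t ≤ 1} are orthogonal with respect to the weight W(t,x) = t^β (1-t)^γ (t - ‖x‖²)^{μ-1/2}: if the inner integral over the unit ball basis {P_k^n} is mutually orthogonal, then ⟨Q^n_{k,m}, Q^{n'}_{k',m'}⟩ = 0 unless m = m', n = n', k = k'. -/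

import Mathlib

open MeasureTheory Finset Polynomial Set Pointwise

/-- Pochhammer symbol (rising factorial) for real arguments. -/
noncomputable def rpoch (a : ℝ) (k : ℕ) : ℝ := ∏ i ∈ Finset.range k, (a + i)

/-- The Jacobi polynomial `P_m^{(α,β)}` defined via the terminating ₂F₁ series. -/
noncomputable def jac (α β : ℝ) (m : ℕ) (t : ℝ) : ℝ :=
  rpoch (α + 1) m / m.factorial *
    ∑ k ∈ Finset.range (m + 1),
      rpoch (-(m : ℝ)) k * rpoch ((m : ℝ) + α + β + 1) k /
        (rpoch (α + 1) k * k.factorial) * ((1 - t) / 2) ^ k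


lemma cpow_real_eq {x p : ℝ} (h0 : 0 ≤ x) :
    (x : ℂ) ^ ((p : ℂ) - 1) = ((x ^ (p - 1) : ℝ) : ℂ) := by
  rw [Complex.ofReal_cpow h0]; push_cast; ring_nf

lemma betaInt_integrable {p q : ℝ} (hp : 0 < p) (hq : 0 < q) :
    IntegrableOn (fun t : ℝ => t ^ (p - 1) * (1 - t) ^ (q - 1)) (Ioo 0 1) := by
  have hc : IntegrableOn (fun x : ℝ => (x : ℂ) ^ ((p : ℂ) - 1) * (1 - (x : ℂ)) ^ ((q : ℂ) - 1))
      (Ioo 0 1) := by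
    have := Complex.betaIntegral_convergent (u := p) (v := q) (by simpa) (by simpa)
    rw [intervalIntegrable_iff_integrableOn_Ioc_of_le zero_le_one] at this
    exact this.mono_set Ioo_subset_Ioc_self
  refine hc.re.congr ((ae_restrict_iff' measurableSet_Ioo).mpr (ae_of_all _ fun x hx => ?_))
  have h0 : (0:ℝ) ≤ x := hx.1.le
  have h1 : (0:ℝ) ≤ 1 - x := by linarith [hx.2]
  have e2 : (1 - (x : ℂ)) ^ ((q : ℂ) - 1) = (((1 - x) ^ (q - 1) : ℝ) : ℂ) := by
    rw [show (1 - (x:ℂ)) = (((1 - x : ℝ)) : ℂ) by push_cast; ring, cpow_real_eq h1]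
  simp [cpow_real_eq h0, e2, ← Complex.ofReal_mul]

lemma betaInt_eq {p q : ℝ} (hp : 0 < p) (hq : 0 < q) :
    ∫ t in Ioo (0:ℝ) 1, t ^ (p - 1) * (1 - t) ^ (q - 1)
      = Real.Gamma p * Real.Gamma q / Real.Gamma (p + q) := by
  have key : Complex.betaIntegral p q =
      ((∫ t in Ioo (0:ℝ) 1, t ^ (p - 1) * (1 - t) ^ (q - 1) : ℝ) : ℂ) := by
    rw [Complex.betaIntegral, intervalIntegral.integral_of_le zero_le_one,
      MeasureTheory.integral_Ioc_eq_integral_Ioo]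
    have : ∫ x in Ioo (0:ℝ) 1, (x : ℂ) ^ ((p:ℂ) - 1) * (1 - (x : ℂ)) ^ ((q:ℂ) - 1)
        = ∫ x in Ioo (0:ℝ) 1, ((x ^ (p - 1) * (1 - x) ^ (q - 1) : ℝ) : ℂ) := by
      refine setIntegral_congr_fun measurableSet_Ioo fun x hx => ?_
      have h0 : (0:ℝ) ≤ x := hx.1.le
      have h1 : (0:ℝ) ≤ 1 - x := by linarith [hx.2]
      have e2 : (1 - (x : ℂ)) ^ ((q : ℂ) - 1) = (((1 - x) ^ (q - 1) : ℝ) : ℂ) := by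
        rw [show (1 - (x:ℂ)) = (((1 - x : ℝ)) : ℂ) by push_cast; ring, cpow_real_eq h1]
      simp [cpow_real_eq h0, e2]
    rw [this]; exact integral_ofReal
  have h2 := Complex.Gamma_mul_Gamma_eq_betaIntegral (s := p) (t := q) (by simpa) (by simpa)
  rw [key] at h2
  have hne : Complex.Gamma ((p:ℂ) + q) ≠ 0 := by
    rw [show ((p:ℂ) + q) = ((p + q : ℝ) : ℂ) by push_cast; ring, Complex.Gamma_ofReal]
    exact_mod_cast (Real.Gamma_pos_of_pos (by linarith)).ne'
  have h3 : ((∫ t in Ioo (0:ℝ) 1, t ^ (p - 1) * (1 - t) ^ (q - 1) : ℝ) : ℂ)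
      = Complex.Gamma p * Complex.Gamma q / Complex.Gamma ((p:ℂ) + q) := by
    rw [eq_div_iff hne, mul_comm]; exact h2.symm
  rw [show ((p:ℂ) + q) = ((p + q : ℝ) : ℂ) by push_cast; ring] at h3
  simp only [Complex.Gamma_ofReal] at h3
  exact_mod_cast h3

lemma rpoch_zero (a : ℝ) : rpoch a 0 = 1 := by simp [rpoch]

lemma rpoch_succ (a : ℝ) (k : ℕ) : rpoch a (k+1) = rpoch a k * (a + k) := by
  simp [rpoch, Finset.prod_range_succ]

lemma rpoch_pos {a : ℝ} (ha : 0 < a) (k : ℕ) : 0 < rpoch a k :=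
  Finset.prod_pos fun i _ => by positivity

lemma rpoch_add (a : ℝ) (m k : ℕ) : rpoch a (m + k) = rpoch a m * rpoch (a + m) k := by
  rw [rpoch, rpoch, rpoch, Finset.prod_range_add]
  congr 1
  exact Finset.prod_congr rfl fun i _ => by push_cast; ring

lemma Gamma_add_nat {a : ℝ} (ha : 0 < a) (k : ℕ) :
    Real.Gamma (a + k) = Real.Gamma a * rpoch a k := by
  induction k with
  | zero => simp [rpoch_zero]
  | succ k ih =>
    have h1 : a + (k+1 : ℕ) = (a + k) + 1 := by push_cast; ring
    rw [h1, Real.Gamma_add_one (by positivity), ih, rpoch_succ]; ring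

lemma rpoch_neg_nat {j k : ℕ} (h : k ≤ j) :
    rpoch (-(j:ℝ)) k = (-1)^k * (k.factorial : ℝ) * (j.choose k : ℝ) := by
  induction k with
  | zero => simp [rpoch_zero]
  | succ k ih =>
    have hk : k ≤ j := le_of_lt h
    rw [rpoch_succ, ih hk]
    have hch : (j.choose (k+1) : ℝ) * ((k:ℝ)+1) = (j.choose k : ℝ) * ((j:ℝ) - k) := by
      have h2 := Nat.choose_succ_right_eq j k
      have hjk : ((j - k : ℕ) : ℝ) = (j:ℝ) - k := by rw [Nat.cast_sub hk]
      calc (j.choose (k+1) : ℝ) * ((k:ℝ)+1) = ((j.choose (k+1) * (k+1) : ℕ) : ℝ) := by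
            push_cast; ring
        _ = ((j.choose k * (j - k) : ℕ) : ℝ) := by rw [h2]
        _ = (j.choose k : ℝ) * ((j:ℝ) - k) := by push_cast [hjk]; ring
    have hf : ((k+1).factorial : ℝ) = (k.factorial : ℝ) * ((k:ℝ)+1) := by
      rw [Nat.factorial_succ]; push_cast; ring
    rw [hf]
    linear_combination ((-1:ℝ)^k * (k.factorial : ℝ)) * hch

/-- j-th finite difference of a polynomial of degree < j vanishes. -/
lemma findiff (j : ℕ) : ∀ p : Polynomial ℝ, p.natDegree < j →
    ∑ k ∈ Finset.range (j+1), (-1:ℝ)^k * (j.choose k : ℝ) * p.eval (k : ℝ) = 0 := by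
  induction j with
  | zero => intro p hp; exact absurd hp (Nat.not_lt_zero _)
  | succ j ih =>
    intro p hp
    set r : Polynomial ℝ := p - p.comp (X + 1) with hr
    set T : ℝ := ∑ k ∈ Finset.range (j+1), (-1:ℝ)^k * (j.choose k : ℝ) * p.eval (k : ℝ) with hT
    set U : ℝ := ∑ k ∈ Finset.range (j+1), (-1:ℝ)^k * (j.choose k : ℝ) * p.eval ((k : ℝ)+1)
      with hU
    have e3 : ∑ k ∈ Finset.range (j+1), (-1:ℝ)^k * (j.choose (k+1) : ℝ) * p.eval ((k:ℝ)+1)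
        = p.eval 0 - T := by
      have h4 : ∑ k ∈ Finset.range (j+2), (-1:ℝ)^k * (j.choose k : ℝ) * p.eval (k : ℝ)
          = T := by
        rw [Finset.sum_range_succ, hT, Nat.choose_eq_zero_of_lt (Nat.lt_succ_self j)]
        simp
      have h5 : ∑ k ∈ Finset.range (j+2), (-1:ℝ)^k * (j.choose k : ℝ) * p.eval (k : ℝ)
          = (∑ k ∈ Finset.range (j+1),
              (-1:ℝ)^(k+1) * (j.choose (k+1) : ℝ) * p.eval ((k:ℝ)+1)) + p.eval 0 := by
        rw [Finset.sum_range_succ' (fun k => (-1:ℝ)^k * (j.choose k : ℝ) * p.eval (k : ℝ)) (j+1)]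
        simp only [Nat.cast_zero, pow_zero, Nat.choose_zero_right, Nat.cast_one, one_mul, mul_one]
        congr 1
        refine Finset.sum_congr rfl fun k _ => by push_cast; ring
      have h6 : ∑ k ∈ Finset.range (j+1), (-1:ℝ)^(k+1) * (j.choose (k+1) : ℝ) * p.eval ((k:ℝ)+1)
          = -∑ k ∈ Finset.range (j+1), (-1:ℝ)^k * (j.choose (k+1) : ℝ) * p.eval ((k:ℝ)+1) := by
        rw [← Finset.sum_neg_distrib]
        exact Finset.sum_congr rfl fun k _ => by ring
      rw [h4, h6] at h5
      linarith
    have key : ∑ k ∈ Finset.range (j+2), (-1:ℝ)^k * ((j+1).choose k : ℝ) * p.eval (k : ℝ)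
        = ∑ k ∈ Finset.range (j+1), (-1:ℝ)^k * (j.choose k : ℝ) * r.eval (k : ℝ) := by
      have h5 : ∑ k ∈ Finset.range (j+2), (-1:ℝ)^k * ((j+1).choose k : ℝ) * p.eval (k : ℝ)
          = (∑ k ∈ Finset.range (j+1),
              (-1:ℝ)^(k+1) * ((j+1).choose (k+1) : ℝ) * p.eval ((k:ℝ)+1)) + p.eval 0 := by
        rw [Finset.sum_range_succ'
          (fun k => (-1:ℝ)^k * ((j+1).choose k : ℝ) * p.eval (k : ℝ)) (j+1)]
        simp only [Nat.cast_zero, pow_zero, Nat.choose_zero_right, Nat.cast_one, one_mul, mul_one]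
        congr 1
        refine Finset.sum_congr rfl fun k _ => by push_cast; ring
      have h7 : ∑ k ∈ Finset.range (j+1),
            (-1:ℝ)^(k+1) * ((j+1).choose (k+1) : ℝ) * p.eval ((k:ℝ)+1)
          = -U - (∑ k ∈ Finset.range (j+1),
              (-1:ℝ)^k * (j.choose (k+1) : ℝ) * p.eval ((k:ℝ)+1)) := by
        rw [hU, ← Finset.sum_neg_distrib, ← Finset.sum_sub_distrib]
        refine Finset.sum_congr rfl fun k _ => by
          rw [Nat.choose_succ_succ]; push_cast; ring
      have h8 : ∀ k : ℕ, r.eval (k : ℝ) = p.eval (k : ℝ) - p.eval ((k:ℝ)+1) := by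
        intro k; simp [hr, eval_comp]
      rw [h5, h7, e3]
      rw [Finset.sum_congr rfl (fun k (_ : k ∈ Finset.range (j+1)) => by rw [h8 k])]
      rw [Finset.sum_congr rfl (fun k (_ : k ∈ Finset.range (j+1)) =>
        (by ring : (-1:ℝ)^k * (j.choose k : ℝ) * (p.eval (k:ℝ) - p.eval ((k:ℝ)+1))
          = (-1:ℝ)^k * (j.choose k : ℝ) * p.eval (k:ℝ)
            - (-1:ℝ)^k * (j.choose k : ℝ) * p.eval ((k:ℝ)+1))), Finset.sum_sub_distrib]
      rw [← hT, ← hU]; ring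
    rw [show j + 1 + 1 = j + 2 from rfl, key]
    by_cases hd : p.natDegree = 0
    · obtain ⟨c, rfl⟩ := natDegree_eq_zero.mp hd
      have : r = 0 := by simp [hr]
      simp [this]
    · have hd1 : 1 ≤ p.natDegree := Nat.one_le_iff_ne_zero.mpr hd
      refine ih r ?_
      have hX : (X + 1 : Polynomial ℝ).natDegree = 1 := by
        rw [show (X + 1 : Polynomial ℝ) = X + C 1 by simp, natDegree_X_add_C]
      have hM : (X + 1 : Polynomial ℝ).Monic := by
        simpa using monic_X_add_C (1:ℝ)
      have hcomp_deg : (p.comp (X + 1 : Polynomial ℝ)).natDegree = p.natDegree := by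
        rw [natDegree_comp, hX, mul_one]
      have hcoeff : r.coeff p.natDegree = 0 := by
        have hlc : (p.comp (X + 1 : Polynomial ℝ)).leadingCoeff = p.leadingCoeff := by
          rw [leadingCoeff_comp (by rw [hX]; norm_num)]
          simp [hM.leadingCoeff]
        have h9 : (p.comp (X + 1 : Polynomial ℝ)).coeff p.natDegree = p.leadingCoeff := by
          rw [← hcomp_deg, ← Polynomial.leadingCoeff, hlc]
        rw [hr, Polynomial.coeff_sub, h9, Polynomial.coeff_natDegree, sub_self]
      have hle : r.natDegree ≤ p.natDegree := le_trans (natDegree_sub_le _ _)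
        (by rw [hcomp_deg]; simp)
      rcases lt_or_eq_of_le hle with h | h
      · omega
      · exfalso
        by_cases hr0 : r = 0
        · rw [hr0] at h; simp at h; omega
        · exact hr0 (leadingCoeff_eq_zero.mp (by rw [Polynomial.leadingCoeff, h, hcoeff]))

noncomputable def pochPoly (c : ℝ) (l : ℕ) : Polynomial ℝ :=
  ∏ i ∈ Finset.range l, (X + C (c + i))

lemma pochPoly_eval (c : ℝ) (l : ℕ) (x : ℝ) : (pochPoly c l).eval x = rpoch (c + x) l := by
  rw [pochPoly, rpoch, eval_prod]
  exact Finset.prod_congr rfl fun i _ => by simp; ring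

lemma pochPoly_monic (c : ℝ) (l : ℕ) : (pochPoly c l).Monic :=
  monic_prod_of_monic _ _ fun i _ => monic_X_add_C _

lemma pochPoly_natDegree (c : ℝ) (l : ℕ) : (pochPoly c l).natDegree = l := by
  rw [pochPoly, natDegree_prod _ _ fun i _ => X_add_C_ne_zero _]
  simp only [natDegree_X_add_C, Finset.sum_const, smul_eq_mul, mul_one, Finset.card_range]

lemma hyp {a g : ℝ} (ha : -1 < a) (hg : -1 < g) {j l : ℕ} (hl : l < j) :
    ∑ k ∈ Finset.range (j+1),
      rpoch (-(j:ℝ)) k * rpoch ((j:ℝ) + a + g + 1) k / (rpoch (a+1) k * (k.factorial : ℝ))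
        * (∫ t in Set.Ioo (0:ℝ) 1, t ^ (a + l + k) * (1-t) ^ g) = 0 := by
  obtain ⟨D, hjD⟩ : ∃ D, j = l + 1 + D := ⟨j - l - 1, by omega⟩
  have hjDR : (j:ℝ) = (l:ℝ) + 1 + D := by rw [hjD]; push_cast; ring
  set x : ℝ := a + l + g + 2 with hx
  have hl0 : (0:ℝ) ≤ l := Nat.cast_nonneg l
  have hx0 : 0 < x := by rw [hx]; linarith
  have hal : (0:ℝ) < a + l + 1 := by linarith
  have hg1 : (0:ℝ) < g + 1 := by linarith
  set Γ1 := Real.Gamma (a + l + 1)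
  set Γ2 := Real.Gamma (g + 1)
  set Γx := Real.Gamma x
  have hΓx : 0 < Γx := Real.Gamma_pos_of_pos hx0
  set Q : Polynomial ℝ := pochPoly (a+1) l * pochPoly x D with hQ
  set E : ℝ := Γ1 * Γ2 / (Γx * rpoch (a+1) l * rpoch x D) with hE
  have hterm : ∀ k ∈ Finset.range (j+1),
      rpoch (-(j:ℝ)) k * rpoch ((j:ℝ) + a + g + 1) k / (rpoch (a+1) k * (k.factorial : ℝ))
        * (∫ t in Set.Ioo (0:ℝ) 1, t ^ (a + l + k) * (1-t) ^ g)
      = E * ((-1:ℝ)^k * (j.choose k : ℝ) * Q.eval (k : ℝ)) := by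
    intro k hk
    have hkj : k ≤ j := by simpa [Nat.lt_succ_iff] using Finset.mem_range.mp hk
    have hint : (∫ t in Set.Ioo (0:ℝ) 1, t ^ (a + l + k) * (1-t) ^ g)
        = Γ1 * rpoch (a+l+1) k * Γ2 / (Γx * rpoch x k) := by
      have h1 : (∫ t in Set.Ioo (0:ℝ) 1, t ^ (a + l + k) * (1-t) ^ g)
          = ∫ t in Set.Ioo (0:ℝ) 1, t ^ ((a + l + k + 1) - 1) * (1-t) ^ ((g+1) - 1) := by
        norm_num
      have hk0 : (0:ℝ) ≤ k := Nat.cast_nonneg k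
      rw [h1, betaInt_eq (by linarith) hg1]
      rw [show a + (l:ℝ) + k + 1 = (a + l + 1) + k by ring, Gamma_add_nat hal k,
        show a + (l:ℝ) + 1 + (k:ℝ) + (g + 1) = x + k by rw [hx]; ring, Gamma_add_nat hx0 k]
    have hA : rpoch (a+1) l * rpoch (a+1+l) k = rpoch (a+1) k * rpoch (a+1+k) l := by
      rw [← rpoch_add, ← rpoch_add, add_comm l k]
    have hB : rpoch x D * rpoch (x+D) k = rpoch x k * rpoch (x+k) D := by
      rw [← rpoch_add, ← rpoch_add, add_comm D k]
    have hxD : (j:ℝ) + a + g + 1 = x + D := by rw [hx, hjDR]; ring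
    have hQev : Q.eval (k:ℝ) = rpoch (a+1+k) l * rpoch (x+k) D := by
      rw [hQ, eval_mul, pochPoly_eval, pochPoly_eval]
    have hAB : rpoch (a+1) l * rpoch (a+1+l) k * (rpoch x D * rpoch (x+D) k)
        = rpoch (a+1) k * rpoch (a+1+k) l * (rpoch x k * rpoch (x+k) D) := by
      rw [hA, hB]
    have hP3 : rpoch (a+1) k ≠ 0 := (rpoch_pos (by linarith) k).ne'
    have hQ3 : rpoch x k ≠ 0 := (rpoch_pos hx0 k).ne'
    have hP1 : rpoch (a+1) l ≠ 0 := (rpoch_pos (by linarith) l).ne'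
    have hQ1 : rpoch x D ≠ 0 := (rpoch_pos hx0 D).ne'
    have hfac : (k.factorial : ℝ) ≠ 0 := Nat.cast_ne_zero.mpr k.factorial_ne_zero
    rw [hint, rpoch_neg_nat hkj, hxD, hQev, hE,
      show a + (l:ℝ) + 1 = a + 1 + l by ring]
    field_simp
    linear_combination ((j.choose k : ℝ) * Γ1 * Γ2) * hAB
  rw [Finset.sum_congr rfl hterm, ← Finset.mul_sum]
  have hdeg : Q.natDegree < j := by
    rw [hQ, natDegree_mul (pochPoly_monic _ _).ne_zero (pochPoly_monic _ _).ne_zero,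
      pochPoly_natDegree, pochPoly_natDegree]
    omega
  rw [findiff j Q hdeg, mul_zero]

lemma intOn_basic {a g : ℝ} (ha : -1 < a) (hg : -1 < g) (l k : ℕ) :
    IntegrableOn (fun t : ℝ => t ^ (a + l + k) * (1-t) ^ g) (Ioo 0 1) := by
  have hl0 : (0:ℝ) ≤ l := Nat.cast_nonneg l
  have hk0 : (0:ℝ) ≤ k := Nat.cast_nonneg k
  have := betaInt_integrable (p := a + l + k + 1) (q := g + 1) (by linarith) (by linarith)
  simpa using this

lemma jacOrth {a g : ℝ} (ha : -1 < a) (hg : -1 < g) {j j' : ℕ} (hlt : j' < j) :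
    ∫ t in Ioo (0:ℝ) 1, jac a g j (1-2*t) * jac a g j' (1-2*t) * (t ^ a * (1-t) ^ g) = 0 := by
  set Dj : ℕ → ℝ := fun k =>
    rpoch (-(j:ℝ)) k * rpoch ((j:ℝ) + a + g + 1) k / (rpoch (a+1) k * (k.factorial : ℝ))
    with hDj
  set Dj' : ℕ → ℝ := fun k =>
    rpoch (-(j':ℝ)) k * rpoch ((j':ℝ) + a + g + 1) k / (rpoch (a+1) k * (k.factorial : ℝ))
    with hDj'
  set Kj : ℝ := rpoch (a+1) j / (j.factorial : ℝ)
  set Kj' : ℝ := rpoch (a+1) j' / (j'.factorial : ℝ)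
  have step1 : ∫ t in Ioo (0:ℝ) 1, jac a g j (1-2*t) * jac a g j' (1-2*t) * (t ^ a * (1-t) ^ g)
      = ∫ t in Ioo (0:ℝ) 1, ∑ l ∈ Finset.range (j'+1), ∑ k ∈ Finset.range (j+1),
          (Kj * Dj k) * (Kj' * Dj' l) * (t ^ (a + l + k) * (1-t) ^ g) := by
    refine setIntegral_congr_fun measurableSet_Ioo fun t ht => ?_
    have ht0 : 0 < t := ht.1
    have hjac : ∀ m : ℕ, jac a g m (1-2*t) = (rpoch (a+1) m / (m.factorial : ℝ)) *
        ∑ k ∈ Finset.range (m+1),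
          rpoch (-(m:ℝ)) k * rpoch ((m:ℝ) + a + g + 1) k
            / (rpoch (a+1) k * (k.factorial : ℝ)) * t ^ k := by
      intro m
      rw [jac]
      congr 1
      refine Finset.sum_congr rfl fun k _ => ?_
      rw [show (1 - (1 - 2*t))/2 = t by ring]
    set S1 : ℝ := ∑ k ∈ Finset.range (j+1), Dj k * t ^ k with hS1
    set S2 : ℝ := ∑ l ∈ Finset.range (j'+1), Dj' l * t ^ l with hS2
    set C : ℝ := Kj * Kj' * t ^ a * (1-t) ^ g with hC
    have hL : jac a g j (1-2*t) * jac a g j' (1-2*t) * (t ^ a * (1-t) ^ g)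
        = (Kj * S1) * (Kj' * S2) * (t ^ a * (1-t) ^ g) := by
      rw [hjac j, hjac j']
    have hR : S1 * (S2 * C) = ∑ l ∈ Finset.range (j'+1), ∑ k ∈ Finset.range (j+1),
          (Kj * Dj k) * (Kj' * Dj' l) * (t ^ (a + l + k) * (1-t) ^ g) := by
      rw [hS1, Finset.sum_mul]
      rw [Finset.sum_congr rfl (fun k (_ : k ∈ Finset.range (j+1)) => by
        rw [hS2, Finset.sum_mul, Finset.mul_sum])]
      rw [Finset.sum_comm]
      refine Finset.sum_congr rfl fun l _ => Finset.sum_congr rfl fun k _ => ?_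
      rw [show t ^ (a + (l:ℝ) + (k:ℝ)) = t ^ a * t ^ l * t ^ k by
        rw [← Real.rpow_natCast t l, ← Real.rpow_natCast t k, ← Real.rpow_add ht0,
          ← Real.rpow_add ht0], hC]
      ring
    rw [hL, ← hR]
    ring
  rw [step1]
  have hint : ∀ l ∈ Finset.range (j'+1), ∀ k ∈ Finset.range (j+1),
      IntegrableOn (fun t : ℝ => (Kj * Dj k) * (Kj' * Dj' l) * (t ^ (a + l + k) * (1-t) ^ g))
        (Ioo 0 1) := fun l _ k _ => (intOn_basic ha hg l k).const_mul _
  rw [integral_finset_sum _ (fun l hl => integrable_finset_sum _ (fun k hk => hint l hl k hk))]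
  rw [Finset.sum_congr rfl (fun l hl =>
    integral_finset_sum _ (fun k hk => hint l hl k hk))]
  refine Finset.sum_eq_zero fun l hl => ?_
  have hlj : l < j := by
    have := Finset.mem_range.mp hl; omega
  have h0 := hyp ha hg hlj (l := l)
  have hc : ∀ k : ℕ,
      (∫ t in Ioo (0:ℝ) 1, (Kj * Dj k) * (Kj' * Dj' l) * (t ^ (a + l + k) * (1-t) ^ g))
      = (Kj * (Kj' * Dj' l)) * (Dj k * ∫ t in Ioo (0:ℝ) 1, t ^ (a + l + k) * (1-t) ^ g) := by
    intro k
    rw [setIntegral_congr_fun measurableSet_Ioo (fun t (ht : t ∈ Ioo (0:ℝ) 1) =>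
      (by ring : (Kj * Dj k) * (Kj' * Dj' l) * (t ^ (a + l + k) * (1-t) ^ g)
        = ((Kj * (Kj' * Dj' l)) * Dj k) * (t ^ (a + l + k) * (1-t) ^ g)))]
    rw [integral_const_mul, mul_assoc]
  rw [Finset.sum_congr rfl (fun k _ => hc k), ← Finset.mul_sum]
  rw [show ∑ k ∈ Finset.range (j+1),
      Dj k * ∫ t in Ioo (0:ℝ) 1, t ^ (a + l + k) * (1-t) ^ g = 0 from h0, mul_zero]

lemma jac_sub_arg (α β : ℝ) (m : ℕ) (t : ℝ) :
    jac α β m (1 - 2*t) = rpoch (α + 1) m / m.factorial *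
      ∑ k ∈ Finset.range (m + 1),
        rpoch (-(m : ℝ)) k * rpoch ((m : ℝ) + α + β + 1) k /
          (rpoch (α + 1) k * k.factorial) * t ^ k := by
  rw [jac]
  congr 1
  exact Finset.sum_congr rfl fun k _ => by rw [show (1 - (1 - 2*t))/2 = t by ring]

/-- Divergent case: `a ≤ -1`. -/
lemma jacDiv {a g : ℝ} (hg : -1 < g) (ha2 : a ≤ -1) (j j' : ℕ) :
    ∫ t in Ioo (0:ℝ) 1, jac a g j (1-2*t) * jac a g j' (1-2*t) * (t ^ a * (1-t) ^ g) = 0 := by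
  by_cases hKA : rpoch (a+1) j / (j.factorial : ℝ) = 0
  · have : ∀ t ∈ Ioo (0:ℝ) 1, jac a g j (1-2*t) * jac a g j' (1-2*t) * (t ^ a * (1-t) ^ g)
        = 0 := by
      intro t _
      rw [jac_sub_arg, hKA, zero_mul, zero_mul, zero_mul]
    rw [setIntegral_congr_fun measurableSet_Ioo this, integral_zero]
  by_cases hKB : rpoch (a+1) j' / (j'.factorial : ℝ) = 0
  · have : ∀ t ∈ Ioo (0:ℝ) 1, jac a g j (1-2*t) * jac a g j' (1-2*t) * (t ^ a * (1-t) ^ g)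
        = 0 := by
      intro t _
      rw [jac_sub_arg a g j', hKB, zero_mul, mul_zero, zero_mul]
    rw [setIntegral_congr_fun measurableSet_Ioo this, integral_zero]
  set φ : ℝ → ℝ := fun t => jac a g j (1-2*t) * jac a g j' (1-2*t) with hφdef
  have hjc : ∀ m : ℕ, Continuous (fun t : ℝ => jac a g m (1-2*t)) := by
    intro m
    have : (fun t : ℝ => jac a g m (1-2*t)) = fun t : ℝ => rpoch (a + 1) m / m.factorial *
        ∑ k ∈ Finset.range (m + 1),
          rpoch (-(m : ℝ)) k * rpoch ((m : ℝ) + a + g + 1) k /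
            (rpoch (a + 1) k * k.factorial) * t ^ k := funext fun t => jac_sub_arg a g m t
    rw [this]
    exact continuous_const.mul (continuous_finset_sum _ fun k _ =>
      continuous_const.mul (continuous_pow k))
  have hφcont : Continuous φ := (hjc j).mul (hjc j')
  have hjac1 : ∀ m : ℕ, jac a g m (1 - 2*0) = rpoch (a+1) m / (m.factorial : ℝ) := by
    intro m
    rw [jac_sub_arg]
    rw [Finset.sum_eq_single 0 (fun k _ hk => by rw [zero_pow hk, mul_zero])
      (fun h => absurd (Finset.mem_range.mpr (Nat.succ_pos m)) h)]
    simp [rpoch]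
  have hφ0 : φ 0 = rpoch (a+1) j / (j.factorial : ℝ) * (rpoch (a+1) j' / (j'.factorial : ℝ)) := by
    rw [hφdef]; simp only; rw [hjac1 j, hjac1 j']
  set C : ℝ := rpoch (a+1) j / (j.factorial : ℝ) * (rpoch (a+1) j' / (j'.factorial : ℝ))
    with hCdef
  have hC : C ≠ 0 := mul_ne_zero hKA hKB
  have hCpos : 0 < |C| / 2 := by positivity
  obtain ⟨δ, hδ0, hδ⟩ := Metric.continuousAt_iff.mp (hφcont.continuousAt (x := 0)) (|C|/2) hCpos
  set δ' : ℝ := min δ (1/2) with hδ'def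
  have hδ'0 : 0 < δ' := lt_min hδ0 (by norm_num)
  have hδ'le : δ' ≤ 1/2 := min_le_right _ _
  set c' : ℝ := min ((1/2 : ℝ) ^ g) 1 with hc'def
  have hc'0 : 0 < c' := lt_min (Real.rpow_pos_of_pos (by norm_num) g) one_pos
  refine (integral_undef fun hf => ?_)
  have hf' : IntegrableOn (fun t => jac a g j (1-2*t) * jac a g j' (1-2*t) * (t ^ a * (1-t) ^ g))
      (Ioo 0 δ') := by
    have hf1 : IntegrableOn
        (fun t => jac a g j (1-2*t) * jac a g j' (1-2*t) * (t ^ a * (1-t) ^ g)) (Ioo 0 1) := hf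
    exact hf1.mono_set (Ioo_subset_Ioo le_rfl (by linarith))
  have h2 : IntegrableOn (fun t : ℝ => t ^ a) (Ioo 0 δ') := by
    refine Integrable.mono' (hf'.norm.const_mul (2 / (|C| * c')))
      ((ContinuousOn.rpow_const continuousOn_id (fun x hx => Or.inl (ne_of_gt hx.1))).aestronglyMeasurable
        measurableSet_Ioo) ?_
    refine (ae_restrict_iff' measurableSet_Ioo).mpr (ae_of_all _ fun t ht => ?_)
    have ht0 : 0 < t := ht.1
    have htδ : t < δ' := ht.2
    have ht2 : t ≤ 1/2 := le_trans htδ.le hδ'le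
    have hφt : |C| / 2 ≤ |φ t| := by
      have hd : dist (φ t) (φ 0) < |C|/2 := hδ (by
        rw [Real.dist_eq, sub_zero, abs_of_pos ht0]
        exact lt_of_lt_of_le htδ (min_le_left _ _))
      rw [Real.dist_eq, hφ0] at hd
      have := abs_sub_abs_le_abs_sub C (φ t)
      rw [abs_sub_comm] at this
      linarith
    have hw : c' ≤ (1 - t) ^ g := by
      rcases le_or_gt 0 g with hg0 | hg0
      · refine le_trans (min_le_left _ _) ?_
        exact Real.rpow_le_rpow (by norm_num) (by linarith) hg0
      · refine le_trans (min_le_right _ _) ?_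
        exact Real.one_le_rpow_of_pos_of_le_one_of_nonpos (by linarith) (by linarith) hg0.le
    have hta : (0:ℝ) ≤ t ^ a := (Real.rpow_pos_of_pos ht0 a).le
    have hw0 : (0:ℝ) ≤ (1-t) ^ g := Real.rpow_nonneg (by linarith) g
    have habs : ‖φ t * (t ^ a * (1-t) ^ g)‖ = |φ t| * (t ^ a * (1-t) ^ g) := by
      rw [Real.norm_eq_abs, abs_mul,
        abs_of_nonneg (mul_nonneg hta hw0)]
    have hbnd : t ^ a ≤ 2 / (|C| * c') * ‖φ t * (t ^ a * (1-t) ^ g)‖ := by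
      rw [habs]
      have h3 : |C|/2 * (t ^ a * c') ≤ |φ t| * (t ^ a * (1-t) ^ g) := by
        have h4 : t ^ a * c' ≤ t ^ a * (1-t) ^ g := mul_le_mul_of_nonneg_left hw hta
        have h5 : (0:ℝ) ≤ t ^ a * c' := mul_nonneg hta hc'0.le
        nlinarith
      have h6 : 0 < |C| * c' := by positivity
      rw [div_mul_eq_mul_div, le_div_iff₀ h6]
      calc t ^ a * (|C| * c') = 2 * (|C|/2 * (t ^ a * c')) := by ring
        _ ≤ 2 * (|φ t| * (t ^ a * (1-t) ^ g)) := by linarith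
    calc ‖t ^ a‖ = t ^ a := by rw [Real.norm_eq_abs, abs_of_nonneg hta]
      _ ≤ _ := hbnd
  have := (intervalIntegral.integrableOn_Ioo_rpow_iff hδ'0).mp h2
  linarith

/-- Orthogonality of the Jacobi polynomials on the paraboloid: if the family
`P n i` is a mutually orthogonal basis of orthogonal polynomials on the unit ball for the
weight `(1-‖y‖²)^{μ-1/2}`, the polynomials
`Q^n_{i,m}(t,x) = P_{m-n}^{(n+β+μ+(d-1)/2, γ)}(1-2t) t^{n/2} P n i (x/√t)` are orthogonal
on the paraboloid `{(t,x) : ‖x‖² ≤ t, 0 ≤ t ≤ 1}` for the weight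
`t^β (1-t)^γ (t-‖x‖²)^{μ-1/2}`. -/
theorem stmt_6 {d : ℕ} {ι : Type*} (μ β γ : ℝ)
    (hμ : -(1 / 2) < μ) (hβ : -1 < β) (hγ : -1 < γ)
    (P : ℕ → ι → EuclideanSpace ℝ (Fin d) → ℝ)
    (horth : ∀ n n' : ℕ, ∀ i i' : ι, (n, i) ≠ (n', i') →
      (∫ y in {y : EuclideanSpace ℝ (Fin d) | ‖y‖ ≤ 1},
        P n i y * P n' i' y * (1 - ‖y‖ ^ 2) ^ (μ - 1 / 2)) = 0)
    (m m' n n' : ℕ) (i i' : ι) (hn : n ≤ m) (hn' : n' ≤ m')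
    (hne : (m, n, i) ≠ (m', n', i')) :
    (∫ t in Set.Ioo (0 : ℝ) 1,
      ∫ x in {x : EuclideanSpace ℝ (Fin d) | ‖x‖ ^ 2 ≤ t},
        (jac ((n : ℝ) + β + μ + ((d : ℝ) - 1) / 2) γ (m - n) (1 - 2 * t) *
            Real.sqrt t ^ n * P n i ((Real.sqrt t)⁻¹ • x)) *
        (jac ((n' : ℝ) + β + μ + ((d : ℝ) - 1) / 2) γ (m' - n') (1 - 2 * t) *
            Real.sqrt t ^ n' * P n' i' ((Real.sqrt t)⁻¹ • x)) *
        (t ^ β * (1 - t) ^ γ * (t - ‖x‖ ^ 2) ^ (μ - 1 / 2))) = 0 := by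
  set J : ℝ := ∫ y in {y : (EuclideanSpace ℝ (Fin d)) | ‖y‖ ≤ 1},
    P n i y * P n' i' y * (1 - ‖y‖ ^ 2) ^ (μ - 1 / 2) with hJ
  have hball : MeasurableSet {y : (EuclideanSpace ℝ (Fin d)) | ‖y‖ ≤ 1} :=
    (isClosed_le continuous_norm continuous_const).measurableSet
  -- inner integral computation
  have inner_eq : ∀ t ∈ Set.Ioo (0:ℝ) 1,
      (∫ x in {x : (EuclideanSpace ℝ (Fin d)) | ‖x‖ ^ 2 ≤ t},
        (jac ((n : ℝ) + β + μ + ((d : ℝ) - 1) / 2) γ (m - n) (1 - 2 * t) *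
            Real.sqrt t ^ n * P n i ((Real.sqrt t)⁻¹ • x)) *
        (jac ((n' : ℝ) + β + μ + ((d : ℝ) - 1) / 2) γ (m' - n') (1 - 2 * t) *
            Real.sqrt t ^ n' * P n' i' ((Real.sqrt t)⁻¹ • x)) *
        (t ^ β * (1 - t) ^ γ * (t - ‖x‖ ^ 2) ^ (μ - 1 / 2)))
      = (jac ((n : ℝ) + β + μ + ((d : ℝ) - 1) / 2) γ (m - n) (1 - 2 * t) *
          jac ((n' : ℝ) + β + μ + ((d : ℝ) - 1) / 2) γ (m' - n') (1 - 2 * t) *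
          (Real.sqrt t ^ (d + n + n') * (t ^ β * (1 - t) ^ γ * t ^ (μ - 1/2)))) * J := by
    intro t ht
    set At : ℝ := jac ((n : ℝ) + β + μ + ((d : ℝ) - 1) / 2) γ (m - n) (1 - 2 * t) with hAt
    set Bt : ℝ := jac ((n' : ℝ) + β + μ + ((d : ℝ) - 1) / 2) γ (m' - n') (1 - 2 * t) with hBt
    set R : ℝ := Real.sqrt t with hRdef
    have ht0 : 0 < t := ht.1
    have hR : 0 < R := Real.sqrt_pos.mpr ht0
    have hR2 : R ^ 2 = t := Real.sq_sqrt ht0.le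
    have hset : R • {y : (EuclideanSpace ℝ (Fin d)) | ‖y‖ ≤ 1} = {x : (EuclideanSpace ℝ (Fin d)) | ‖x‖ ^ 2 ≤ t} := by
      ext x
      rw [Set.mem_smul_set_iff_inv_smul_mem₀ hR.ne', Set.mem_setOf_eq, Set.mem_setOf_eq,
        norm_smul, norm_inv, Real.norm_eq_abs, abs_of_pos hR]
      constructor
      · intro h
        have hx : ‖x‖ ≤ R := by
          have := mul_le_mul_of_nonneg_left h hR.le
          rwa [mul_one, ← mul_assoc, mul_inv_cancel₀ hR.ne', one_mul] at this
        nlinarith [norm_nonneg x]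
      · intro h
        have hx : ‖x‖ ≤ R := by nlinarith [norm_nonneg x]
        calc R⁻¹ * ‖x‖ ≤ R⁻¹ * R := by
              exact mul_le_mul_of_nonneg_left hx (inv_pos.mpr hR).le
          _ = 1 := inv_mul_cancel₀ hR.ne'
    have hchg := Measure.setIntegral_comp_smul_of_pos (μ := (volume : Measure (EuclideanSpace ℝ (Fin d))))
      (f := fun x : (EuclideanSpace ℝ (Fin d)) =>
        (At * R ^ n * P n i (R⁻¹ • x)) *
        (Bt * R ^ n' * P n' i' (R⁻¹ • x)) *
        (t ^ β * (1 - t) ^ γ * (t - ‖x‖ ^ 2) ^ (μ - 1 / 2)))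
      ({y : (EuclideanSpace ℝ (Fin d)) | ‖y‖ ≤ 1}) hR
    rw [hset] at hchg
    have hfr : Module.finrank ℝ (EuclideanSpace ℝ (Fin d)) = d := finrank_euclideanSpace_fin
    rw [hfr] at hchg
    have hptwise : ∀ y ∈ {y : (EuclideanSpace ℝ (Fin d)) | ‖y‖ ≤ 1},
        (At * R ^ n * P n i (R⁻¹ • (R • y))) *
        (Bt * R ^ n' * P n' i' (R⁻¹ • (R • y))) *
        (t ^ β * (1 - t) ^ γ * (t - ‖R • y‖ ^ 2) ^ (μ - 1 / 2))
        = (At * Bt * (R ^ (n + n') * (t ^ β * (1 - t) ^ γ * t ^ (μ - 1/2))))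
          * (P n i y * P n' i' y * (1 - ‖y‖ ^ 2) ^ (μ - 1 / 2)) := by
      intro y hy
      have hy1 : ‖y‖ ≤ 1 := hy
      have hyy : R⁻¹ • (R • y) = y := by
        rw [smul_smul, inv_mul_cancel₀ hR.ne', one_smul]
      have hnrm : ‖R • y‖ ^ 2 = t * ‖y‖ ^ 2 := by
        rw [norm_smul, Real.norm_eq_abs, abs_of_pos hR, mul_pow, hR2]
      have hsub : t - ‖R • y‖ ^ 2 = t * (1 - ‖y‖ ^ 2) := by rw [hnrm]; ring
      have hy2 : (0:ℝ) ≤ 1 - ‖y‖ ^ 2 := by nlinarith [norm_nonneg y]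
      rw [hyy, hsub, Real.mul_rpow ht0.le hy2, pow_add]
      ring
    rw [setIntegral_congr_fun hball hptwise] at hchg
    rw [integral_const_mul] at hchg
    -- hchg : const * J = (R ^ d)⁻¹ • ∫ x in S_t, F x
    have := hchg.symm
    rw [smul_eq_mul] at this
    -- this : (R^d)⁻¹ * ∫_{S_t} F = c * J
    have hRd : (0:ℝ) < R ^ d := pow_pos hR d
    have := congrArg (fun z => R ^ d * z) this
    rw [← mul_assoc, mul_inv_cancel₀ hRd.ne', one_mul] at this
    rw [this]
    rw [show (d + n + n') = d + (n + n') by omega, pow_add]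
    ring
  rw [setIntegral_congr_fun measurableSet_Ioo inner_eq, integral_mul_const]
  by_cases hni : (n, i) = (n', i')
  · -- same ball index: use Jacobi orthogonality
    have hnn : n = n' := (Prod.mk.injEq _ _ _ _).mp hni |>.1
    have hii : i = i' := (Prod.mk.injEq _ _ _ _).mp hni |>.2
    subst hnn; subst hii
    have hmm : m ≠ m' := fun h => hne (by rw [h])
    set a : ℝ := (n : ℝ) + β + μ + ((d : ℝ) - 1) / 2 with ha
    have hcongr : ∀ t ∈ Set.Ioo (0:ℝ) 1,
        jac a γ (m - n) (1 - 2 * t) * jac a γ (m' - n) (1 - 2 * t) *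
          (Real.sqrt t ^ (d + n + n) * (t ^ β * (1 - t) ^ γ * t ^ (μ - 1/2)))
        = jac a γ (m - n) (1 - 2 * t) * jac a γ (m' - n) (1 - 2 * t) *
          (t ^ a * (1 - t) ^ γ) := by
      intro t ht
      have ht0 : 0 < t := ht.1
      have hsq : Real.sqrt t ^ (d + n + n) = t ^ (((d + n + n : ℕ) : ℝ) / 2) := by
        rw [Real.sqrt_eq_rpow, ← Real.rpow_natCast (t ^ ((1:ℝ)/2)) (d + n + n),
          ← Real.rpow_mul ht0.le]
        ring_nf
      have h1 : t ^ (((d + n + n : ℕ) : ℝ)/2) * t ^ β * t ^ (μ - 1/2) = t ^ a := by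
        rw [← Real.rpow_add ht0, ← Real.rpow_add ht0]
        congr 1
        rw [ha]; push_cast; ring
      rw [hsq]
      calc jac a γ (m - n) (1 - 2 * t) * jac a γ (m' - n) (1 - 2 * t) *
            (t ^ (((d + n + n : ℕ) : ℝ)/2) * (t ^ β * (1 - t) ^ γ * t ^ (μ - 1/2)))
          = jac a γ (m - n) (1 - 2 * t) * jac a γ (m' - n) (1 - 2 * t) *
            ((t ^ (((d + n + n : ℕ) : ℝ)/2) * t ^ β * t ^ (μ - 1/2)) * (1 - t) ^ γ) := by ring
        _ = _ := by rw [h1]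
    rw [setIntegral_congr_fun measurableSet_Ioo hcongr]
    by_cases haa : -1 < a
    · have hj : m - n ≠ m' - n := by omega
      rcases lt_or_gt_of_ne hj with h | h
      · have hswap : ∀ t ∈ Set.Ioo (0:ℝ) 1,
            jac a γ (m - n) (1 - 2 * t) * jac a γ (m' - n) (1 - 2 * t) * (t ^ a * (1 - t) ^ γ)
            = jac a γ (m' - n) (1 - 2 * t) * jac a γ (m - n) (1 - 2 * t)
              * (t ^ a * (1 - t) ^ γ) := fun t _ => by ring
        rw [setIntegral_congr_fun measurableSet_Ioo hswap, jacOrth haa hγ h, zero_mul]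
      · rw [jacOrth haa hγ h, zero_mul]
    · rw [jacDiv hγ (le_of_not_gt haa) _ _, zero_mul]
  · rw [hJ, horth n n' i i' hni, mul_zero]
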